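/- arXiv:0809.0245 — 4 statements merged into one kernel-verified Lean document; each statement's English description precedes it below -/
import Mathlib

section
/- Let R be an irreducible root system and let α, β ∈ R with β a long root and (α, β) = 0. Then there exist γ, γ' ∈ R with γ ∉ {α, β} such that α + β = γ + γ'. -/
open RealInnerProductSpace

structure RootSys (n : ℕ) where
  R : Set (EuclideanSpace ℝ (Fin n))
  finite : R.Finite
  zero_not_mem : (0 : EuclideanSpace ℝ (Fin n)) ∉ R
  spans : Submodule.span ℝ R = ⊤
  neg_mem : ∀ α ∈ R, -α ∈ R
  reduced : ∀ α ∈ R, ∀ t : ℝ, t • α ∈ R → t = 1 ∨ t = -1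
  reflect_mem : ∀ α ∈ R, ∀ β ∈ R, β - (2 * ⟪α, β⟫ / ⟪α, α⟫) • α ∈ R
  crystal : ∀ α ∈ R, ∀ β ∈ R, ∃ k : ℤ, 2 * ⟪α, β⟫ / ⟪α, α⟫ = (k : ℝ)
  irreducible : ∀ S ⊆ R, (∀ α ∈ S, ∀ β ∈ R \ S, ⟪α, β⟫ = 0) → S = ∅ ∨ S = R


/-!
Irreducibility gives a root `η` orthogonal to neither `α` nor `β`: the roots `δ` admitting a root
non-orthogonal to both `δ` and `β` contain `β` and are closed under passing to non-orthogonal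
neighbours, because of the rule that two roots with positive inner product differ by a root.
Replacing `η` by `-η` and then possibly by `η + β` yields a root `γ` with `(γ, α) > 0` and
`(γ, β) > 0`. Hence `γ - β` is a root, and so is `γ' = α - (γ - β)`, since `(α, γ - β) > 0`
and `α ≠ γ - β`: for a long root `β` and a root `γ ≠ ±β` one has `2 |(β, γ)| ≤ (β, β)`.
Then `α + β = γ + γ'`.
-/

namespace RootSys

variable {n : ℕ} (RS : RootSys n) {x y z : EuclideanSpace ℝ (Fin n)}

lemma ne_zero_of_mem (hx : x ∈ RS.R) : x ≠ 0 :=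
  fun h => RS.zero_not_mem (h ▸ hx)

lemma inner_self_pos (hx : x ∈ RS.R) : 0 < ⟪x, x⟫ :=
  real_inner_self_pos.mpr (RS.ne_zero_of_mem hx)

lemma exists_int_two_mul_inner_eq (hx : x ∈ RS.R) (hy : y ∈ RS.R) :
    ∃ k : ℤ, 2 * ⟪x, y⟫ = k * ⟪x, x⟫ := by
  obtain ⟨k, hk⟩ := RS.crystal x hx y hy
  exact ⟨k, by rw [← hk, div_mul_cancel₀ _ (RS.inner_self_pos hx).ne']⟩

lemma sub_mem_of_two_mul_inner_eq (hx : x ∈ RS.R) (hy : y ∈ RS.R)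
    (h : 2 * ⟪x, y⟫ = ⟪x, x⟫) : y - x ∈ RS.R := by
  have := RS.reflect_mem x hx y hy
  rwa [h, div_self (RS.inner_self_pos hx).ne', one_smul] at this

lemma abs_inner_lt_norm_mul_norm (hx : x ∈ RS.R) (hy : y ∈ RS.R) (h₁ : y ≠ x) (h₂ : y ≠ -x) :
    |⟪x, y⟫| < ‖x‖ * ‖y‖ := by
  refine (abs_real_inner_le_norm x y).lt_of_ne fun heq => ?_
  obtain ⟨r, -, rfl⟩ :=
    (norm_inner_eq_norm_iff (RS.ne_zero_of_mem hx) (RS.ne_zero_of_mem hy)).mp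
    (by rwa [Real.norm_eq_abs])
  rcases RS.reduced x hx r hy with rfl | rfl
  · exact h₁ (one_smul ℝ x)
  · exact h₂ (neg_one_smul ℝ x)

/-- The Cartan integers of `x` on `y` and of `y` on `x` are positive with product `< 4`,
so one of them is `1`. -/
lemma sub_mem_of_inner_pos (hx : x ∈ RS.R) (hy : y ∈ RS.R) (hpos : 0 < ⟪x, y⟫) (hne : x ≠ y) :
    x - y ∈ RS.R := by
  have hxx := RS.inner_self_pos hx
  have hyy := RS.inner_self_pos hy
  have hne' : y ≠ -x := by
    rintro rfl
    rw [inner_neg_right] at hpos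
    linarith
  have hcs : ⟪x, y⟫ ^ 2 < ⟪x, x⟫ * ⟪y, y⟫ := by
    rw [real_inner_self_eq_norm_sq, real_inner_self_eq_norm_sq, ← mul_pow, ← sq_abs]
    exact pow_lt_pow_left₀ (RS.abs_inner_lt_norm_mul_norm hx hy (Ne.symm hne) hne')
      (abs_nonneg _) two_ne_zero
  obtain ⟨a, ha⟩ := RS.exists_int_two_mul_inner_eq hx hy
  obtain ⟨b, hb⟩ := RS.exists_int_two_mul_inner_eq hy hx
  rw [real_inner_comm] at hb
  have ha0 : (0 : ℝ) < a := pos_of_mul_pos_left (ha ▸ by linarith) hxx.le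
  have hb0 : (0 : ℝ) < b := pos_of_mul_pos_left (hb ▸ by linarith) hyy.le
  have hab : ((a * b : ℤ) : ℝ) < 4 := by
    push_cast
    nlinarith [mul_pos hxx hyy]
  have ha1 : 0 < a := by exact_mod_cast ha0
  have hb1 : 0 < b := by exact_mod_cast hb0
  have hab' : a * b < 4 := by exact_mod_cast hab
  obtain rfl | rfl : a = 1 ∨ b = 1 := by
    by_contra! h
    nlinarith [(show 2 ≤ a by omega), (show 2 ≤ b by omega)]
  · simpa using RS.neg_mem _ (RS.sub_mem_of_two_mul_inner_eq hx hy (by simpa using ha))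
  · exact RS.sub_mem_of_two_mul_inner_eq hy hx (by rw [real_inner_comm]; simpa using hb)

lemma exists_inner_pos_of_inner_ne_zero (hx : x ∈ RS.R) (hy : ⟪x, y⟫ ≠ 0) (hz : ⟪x, z⟫ ≠ 0) :
    ∃ x' ∈ RS.R, 0 < ⟪x', y⟫ ∧ ⟪x', z⟫ ≠ 0 := by
  rcases hy.lt_or_gt with hneg | hpos
  · exact ⟨-x, RS.neg_mem x hx, by rw [inner_neg_left]; linarith, by simpa [inner_neg_left]⟩
  · exact ⟨x, hx, hpos, hz⟩

lemma two_mul_abs_inner_le_of_long (hx : x ∈ RS.R) (hy : y ∈ RS.R)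
    (hlong : ∀ δ ∈ RS.R, ‖δ‖ ≤ ‖x‖) (h₁ : y ≠ x) (h₂ : y ≠ -x) :
    2 * |⟪x, y⟫| ≤ ⟪x, x⟫ := by
  have hxx := RS.inner_self_pos hx
  have hlt : |⟪x, y⟫| < ⟪x, x⟫ := by
    calc |⟪x, y⟫| < ‖x‖ * ‖y‖ := RS.abs_inner_lt_norm_mul_norm hx hy h₁ h₂
      _ ≤ ‖x‖ * ‖x‖ := by gcongr; exact hlong y hy
      _ = ⟪x, x⟫ := (real_inner_self_eq_norm_mul_norm x).symm
  obtain ⟨k, hk⟩ := RS.exists_int_two_mul_inner_eq hx hy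
  have habs : 2 * |⟪x, y⟫| = |(k : ℝ)| * ⟪x, x⟫ := by
    rw [← abs_two, ← abs_mul, hk, abs_mul, abs_of_pos hxx]
  have hk1 : |(k : ℝ)| ≤ 1 := by
    have hk2 : |(k : ℝ)| < 2 := by nlinarith
    rw [← Int.cast_abs] at hk2 ⊢
    have : |k| < 2 := by exact_mod_cast hk2
    exact_mod_cast (show |k| ≤ 1 by omega)
  rw [habs]
  nlinarith

lemma forall_mem_of_inner_ne_zero_imp {P : EuclideanSpace ℝ (Fin n) → Prop}
    (hx : x ∈ RS.R) (hPx : P x) (hP : ∀ b ∈ RS.R, ∀ c ∈ RS.R, ⟪b, c⟫ ≠ 0 → P b → P c) :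
    ∀ y ∈ RS.R, P y := by
  have hS : {y ∈ RS.R | P y} = ∅ ∨ {y ∈ RS.R | P y} = RS.R := by
    refine RS.irreducible _ (fun y hy => hy.1) fun b hb c hc => ?_
    by_contra hbc
    exact hc.2 ⟨hc.1, hP b hb.1 c hc.1 hbc hb.2⟩
  rcases hS with h | h
  · exact absurd h (Set.nonempty_iff_ne_empty.mp ⟨x, hx, hPx⟩)
  · exact fun y hy => ((Set.ext_iff.mp h y).mpr hy).2

lemma exists_inner_ne_zero_of_inner_ne_zero {b c : EuclideanSpace ℝ (Fin n)} (hc : c ∈ RS.R)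
    (hbc : ⟪c, b⟫ ≠ 0) (h : ∃ η ∈ RS.R, ⟪η, c⟫ ≠ 0 ∧ ⟪η, z⟫ ≠ 0) :
    ∃ η ∈ RS.R, ⟪η, b⟫ ≠ 0 ∧ ⟪η, z⟫ ≠ 0 := by
  by_cases hcz : ⟪c, z⟫ = 0
  · obtain ⟨η₀, hη₀, hη₀c, hη₀z⟩ := h
    obtain ⟨η, hη, hηc, hηz⟩ := RS.exists_inner_pos_of_inner_ne_zero hη₀ hη₀c hη₀z
    have hsub : η - c ∈ RS.R :=
      RS.sub_mem_of_inner_pos hη hc hηc fun h => hηz (h ▸ hcz)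
    by_cases hb : ⟪η - c, b⟫ = 0
    · rw [inner_sub_left, sub_eq_zero] at hb
      exact ⟨η, hη, hb ▸ hbc, hηz⟩
    · exact ⟨η - c, hsub, hb, by rwa [inner_sub_left, hcz, sub_zero]⟩
  · exact ⟨c, hc, hbc, hcz⟩

lemma exists_inner_ne_zero_inner_ne_zero (hx : x ∈ RS.R) (hy : y ∈ RS.R) :
    ∃ η ∈ RS.R, ⟪η, x⟫ ≠ 0 ∧ ⟪η, y⟫ ≠ 0 := by
  have hyy := (RS.inner_self_pos hy).ne'
  refine RS.forall_mem_of_inner_ne_zero_imp (P := fun δ => ∃ η ∈ RS.R, ⟪η, δ⟫ ≠ 0 ∧ ⟪η, y⟫ ≠ 0)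
    hy ⟨y, hy, hyy, hyy⟩ (fun b hb c _ hbc hPb => ?_) x hx
  exact RS.exists_inner_ne_zero_of_inner_ne_zero hb hbc hPb

lemma exists_inner_pos_inner_pos_of_long (hx : x ∈ RS.R) (hy : y ∈ RS.R)
    (hlong : ∀ δ ∈ RS.R, ‖δ‖ ≤ ‖y‖) (horth : ⟪x, y⟫ = 0) :
    ∃ γ ∈ RS.R, 0 < ⟪γ, x⟫ ∧ 0 < ⟪γ, y⟫ := by
  obtain ⟨η₀, hη₀, hη₀x, hη₀y⟩ := RS.exists_inner_ne_zero_inner_ne_zero hx hy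
  obtain ⟨η, hη, hηx, hηy⟩ := RS.exists_inner_pos_of_inner_ne_zero hη₀ hη₀x hη₀y
  rcases hηy.lt_or_gt with hneg | hpos
  · have hyx : ⟪y, x⟫ = 0 := by rwa [real_inner_comm]
    have hne : η ≠ y := by rintro rfl; linarith
    have hne' : η ≠ -y := by rintro rfl; rw [inner_neg_left] at hηx; linarith
    have hbound := RS.two_mul_abs_inner_le_of_long hy hη hlong hne hne'
    rw [real_inner_comm] at hbound
    have hadd : η + y ∈ RS.R := by
      simpa using RS.sub_mem_of_inner_pos hη (RS.neg_mem y hy)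
        (by rw [inner_neg_right]; linarith) hne'
    refine ⟨η + y, hadd, by rwa [inner_add_left, hyx, add_zero], ?_⟩
    rw [inner_add_left]
    have := neg_abs_le ⟪η, y⟫
    linarith [RS.inner_self_pos hy]
  · exact ⟨η, hη, hηx, hpos⟩

end RootSys

/-- If `α, β ∈ R` with `β` a long root and `(α, β) = 0`, then `α + β = γ + γ'`
for some roots `γ, γ'` with `γ ∉ {α, β}`. -/
theorem stmt_13 {n : ℕ} (RS : RootSys n) (α β : EuclideanSpace ℝ (Fin n))
    (hα : α ∈ RS.R) (hβ : β ∈ RS.R)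
    (hlong : ∀ δ ∈ RS.R, ‖δ‖ ≤ ‖β‖)
    (horth : ⟪α, β⟫ = 0) :
    ∃ γ ∈ RS.R, ∃ γ' ∈ RS.R, γ ≠ α ∧ γ ≠ β ∧ α + β = γ + γ' := by
  obtain ⟨γ, hγ, hγα, hγβ⟩ := RS.exists_inner_pos_inner_pos_of_long hα hβ hlong horth
  have hβα : ⟪β, α⟫ = 0 := by rwa [real_inner_comm]
  have hγ_ne_β : γ ≠ β := by rintro rfl; linarith
  have hγ_ne_neg_β : γ ≠ -β := by rintro rfl; rw [inner_neg_left] at hγα; linarith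
  have hbound := RS.two_mul_abs_inner_le_of_long hβ hγ hlong hγ_ne_β hγ_ne_neg_β
  rw [real_inner_comm, abs_of_pos hγβ] at hbound
  have hγβ_mem : γ - β ∈ RS.R := RS.sub_mem_of_inner_pos hγ hβ hγβ hγ_ne_β
  have hα_ne : α ≠ γ - β := by
    intro h
    rw [h, inner_sub_left, sub_eq_zero] at horth
    linarith [RS.inner_self_pos hβ]
  have hγ' : α - (γ - β) ∈ RS.R :=
    RS.sub_mem_of_inner_pos hα hγβ_mem (by rwa [inner_sub_right, horth, sub_zero, real_inner_comm])
      hα_ne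
  refine ⟨γ, hγ, α - (γ - β), hγ', fun h => ?_, hγ_ne_β, by abel⟩
  rw [h, horth] at hγβ
  exact hγβ.false
end

section
/- Let R be an irreducible root system and S ⊆ R a set of long roots such that α + β ∉ R for all α, β ∈ S and (γ + R) ∩ (S + S) = ∅ for all γ ∈ R \ S. For α ∈ S set α^⊥ = {γ ∈ S : (α, γ) = 0}. Then #α^⊥ = #β^⊥ for all α, β ∈ S. -/
open RealInnerProductSpace

/-!
Inner products within `S` only take the values `0`, `1` and `±2`: the value `-1` would make
`α + β` a root. For `(α, β) = 1` the reflection in the long root `α - β` maps `α^⊥` bijectively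
onto `β^⊥`: it fixes the `γ` with `(β, γ) = 0` and sends the others to `γ + α - β`, which lies
in `S` because `(γ + α - β) + β = γ + α ∈ S + S`. For orthogonal `α, β`, irreducibility yields a
root `γ` with `(α, γ) = (β, γ) = 1`, and `γ ∈ S` since `γ + (α + β - γ) = α + β`; so `α^⊥` and
`β^⊥` are both in bijection with `γ^⊥`.
-/

section InnerProductSpace

variable {E : Type*} [NormedAddCommGroup E] [InnerProductSpace ℝ E] {α γ : E}

theorem eq_of_norm_le_of_inner_eq_inner_self (hγ : ‖γ‖ ≤ ‖α‖) (h : ⟪α, γ⟫ = ⟪α, α⟫) :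
    γ = α := by
  have hsq : ‖α - γ‖ ^ 2 ≤ 0 := by
    rw [norm_sub_sq_real, h, real_inner_self_eq_norm_sq]
    nlinarith [norm_nonneg γ]
  exact (sub_eq_zero.mp (norm_eq_zero.mp (by nlinarith [norm_nonneg (α - γ)]))).symm

theorem abs_inner_le_inner_self_of_norm_le (hγ : ‖γ‖ ≤ ‖α‖) : |⟪α, γ⟫| ≤ ⟪α, α⟫ := by
  rw [real_inner_self_eq_norm_sq, sq]
  exact (abs_real_inner_le_norm α γ).trans (by gcongr)

end InnerProductSpace

namespace RootSys

variable {n : ℕ} (RS : RootSys n)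

def IsLong (α : EuclideanSpace ℝ (Fin n)) : Prop :=
  α ∈ RS.R ∧ ⟪α, α⟫ = 2 ∧ ∀ ε ∈ RS.R, ‖ε‖ ≤ ‖α‖

variable {RS} {α β γ v w : EuclideanSpace ℝ (Fin n)}

theorem add_mem_of_inner_eq_neg_one (hv : v ∈ RS.R) (hw : w ∈ RS.R) (hvv : ⟪v, v⟫ = 2)
    (hvw : ⟪v, w⟫ = -1) : w + v ∈ RS.R := by
  have h := RS.reflect_mem v hv w hw
  rwa [hvv, hvw, show (2 * -1 / 2 : ℝ) = -1 by norm_num, neg_one_smul, sub_neg_eq_add] at h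

theorem sub_mem_of_inner_eq_one (hv : v ∈ RS.R) (hw : w ∈ RS.R) (hvv : ⟪v, v⟫ = 2)
    (hvw : ⟪v, w⟫ = 1) : w - v ∈ RS.R := by
  have h := RS.reflect_mem v hv w hw
  rwa [hvv, hvw, show (2 * 1 / 2 : ℝ) = 1 by norm_num, one_smul] at h

theorem IsLong.inner_cases (hα : RS.IsLong α) (hγ : γ ∈ RS.R) :
    ⟪α, γ⟫ = -1 ∨ ⟪α, γ⟫ = 0 ∨ ⟪α, γ⟫ = 1 ∨ γ = α ∨ γ = -α := by
  obtain ⟨hαR, hαα, hmax⟩ := hα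
  obtain ⟨k, hk⟩ := RS.crystal α hαR γ hγ
  have hαγ : ⟪α, γ⟫ = k := by rw [← hk, hαα]; ring
  have hbound : |(k : ℝ)| ≤ 2 := hαα ▸ hαγ ▸ abs_inner_le_inner_self_of_norm_le (hmax γ hγ)
  obtain ⟨hlo, hhi⟩ := abs_le.mp (show |k| ≤ 2 by exact_mod_cast hbound)
  interval_cases k
  · refine Or.inr (Or.inr (Or.inr (Or.inr (neg_eq_iff_eq_neg.mp ?_))))
    apply eq_of_norm_le_of_inner_eq_inner_self (by rw [norm_neg]; exact hmax γ hγ)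
    rw [inner_neg_right, hαγ, hαα]; norm_num
  · exact Or.inl (by exact_mod_cast hαγ)
  · exact Or.inr (Or.inl (by exact_mod_cast hαγ))
  · exact Or.inr (Or.inr (Or.inl (by exact_mod_cast hαγ)))
  · refine Or.inr (Or.inr (Or.inr (Or.inl ?_)))
    exact eq_of_norm_le_of_inner_eq_inner_self (hmax γ hγ) (by rw [hαγ, hαα]; norm_num)

theorem reflTransGen_inner_ne_zero (hα : α ∈ RS.R) (hβ : β ∈ RS.R) :
    Relation.ReflTransGen (fun x y => x ∈ RS.R ∧ y ∈ RS.R ∧ ⟪x, y⟫ ≠ 0) α β := by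
  set T := {x ∈ RS.R | Relation.ReflTransGen (fun x y => x ∈ RS.R ∧ y ∈ RS.R ∧ ⟪x, y⟫ ≠ 0) α x}
  have hsplit : ∀ x ∈ T, ∀ y ∈ RS.R \ T, ⟪x, y⟫ = 0 := fun x hx y hy => by
    by_contra hxy
    exact hy.2 ⟨hy.1, hx.2.tail ⟨hx.1, hy.1, hxy⟩⟩
  rcases RS.irreducible T (fun x hx => hx.1) hsplit with hT | hT
  · exact absurd (hT ▸ ⟨hα, .refl⟩ : α ∈ (∅ : Set _)) id
  · exact (hT ▸ hβ : β ∈ T).2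

theorem exists_inner_ne_zero_of_reflection (hβ : β ∈ RS.R) (hγ : γ ∈ RS.R) (hαβ : ⟪α, β⟫ = 0)
    (hαγ : ⟪α, γ⟫ ≠ 0) (hγβ : ⟪γ, β⟫ ≠ 0) (hγv : ⟪γ, v⟫ = 0) (hβv : ⟪β, v⟫ ≠ 0) :
    ∃ μ ∈ RS.R, ⟪α, μ⟫ ≠ 0 ∧ ⟪μ, v⟫ ≠ 0 := by
  have hββ : ⟪β, β⟫ ≠ 0 := inner_self_ne_zero.mpr fun h => RS.zero_not_mem (h ▸ hβ)
  have hc : 2 * ⟪β, γ⟫ / ⟪β, β⟫ ≠ 0 :=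
    div_ne_zero (mul_ne_zero two_ne_zero (real_inner_comm β γ ▸ hγβ)) hββ
  refine ⟨_, RS.reflect_mem β hβ γ hγ, ?_, ?_⟩
  · rwa [inner_sub_right, real_inner_smul_right, hαβ, mul_zero, sub_zero]
  · rw [inner_sub_left, real_inner_smul_left, hγv, zero_sub, neg_ne_zero]
    exact mul_ne_zero hc hβv

theorem exists_inner_ne_zero_inner_ne_zero_s14 (hα : α ∈ RS.R) (hβ : β ∈ RS.R) (hαβ : ⟪α, β⟫ = 0) :
    ∃ γ ∈ RS.R, ⟪α, γ⟫ ≠ 0 ∧ ⟪γ, β⟫ ≠ 0 := by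
  -- Along a chain of non-orthogonal roots from `α`, a reflection shortcut keeps every root
  -- within distance two of `α`.
  suffices ⟪α, β⟫ ≠ 0 ∨ ∃ γ ∈ RS.R, ⟪α, γ⟫ ≠ 0 ∧ ⟪γ, β⟫ ≠ 0 from this.resolve_left (· hαβ)
  have hchain := reflTransGen_inner_ne_zero hα hβ
  clear hβ hαβ
  induction hchain with
  | refl => exact .inl (inner_self_ne_zero.mpr fun h => RS.zero_not_mem (h ▸ hα))
  | @tail w v _ hwv ih =>
    obtain ⟨hw, -, hwv⟩ := hwv
    rcases ih with hαw | ⟨γ, hγ, hαγ, hγw⟩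
    · exact .inr ⟨w, hw, hαw, hwv⟩
    by_cases hγv : ⟪γ, v⟫ = 0
    · by_cases hαw : ⟪α, w⟫ = 0
      · exact .inr (exists_inner_ne_zero_of_reflection hw hγ hαw hαγ hγw hγv hwv)
      · exact .inr ⟨w, hw, hαw, hwv⟩
    · exact .inr ⟨γ, hγ, hαγ, hγv⟩

theorem IsLong.inner_eq_one_or_eq_neg_one (hα : RS.IsLong α) (hγ : γ ∈ RS.R) (h0 : ⟪α, γ⟫ ≠ 0)
    (hne : γ ≠ α) (hne' : γ ≠ -α) : ⟪α, γ⟫ = 1 ∨ ⟪α, γ⟫ = -1 := by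
  rcases hα.inner_cases hγ with h | h | h | h | h
  exacts [.inr h, absurd h h0, .inl h, absurd h hne, absurd h hne']

theorem IsLong.exists_inner_eq_one_inner_eq_one (hα : RS.IsLong α) (hβ : RS.IsLong β)
    (hαβ : ⟪α, β⟫ = 0) : ∃ γ ∈ RS.R, ⟪α, γ⟫ = 1 ∧ ⟪β, γ⟫ = 1 := by
  obtain ⟨δ, hδ, hαδ, hδβ⟩ := exists_inner_ne_zero_inner_ne_zero_s14 hα.1 hβ.1 hαβ
  have hβδ : ⟪β, δ⟫ ≠ 0 := real_inner_comm β δ ▸ hδβ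
  have hαsign := hα.inner_eq_one_or_eq_neg_one hδ hαδ (by rintro rfl; exact hδβ hαβ)
    (by rintro rfl; simp [hαβ] at hδβ)
  have hβsign := hβ.inner_eq_one_or_eq_neg_one hδ hβδ (by rintro rfl; exact hαδ hαβ)
    (by rintro rfl; simp [hαβ] at hαδ)
  obtain ⟨ε, hε, hαε, hβε⟩ : ∃ ε ∈ RS.R, ⟪α, ε⟫ = 1 ∧ (⟪β, ε⟫ = 1 ∨ ⟪β, ε⟫ = -1) := by
    rcases hαsign with h | h
    · exact ⟨δ, hδ, h, hβsign⟩
    · refine ⟨-δ, RS.neg_mem δ hδ, by simp [h], ?_⟩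
      rcases hβsign with h' | h' <;> simp [h']
  rcases hβε with h | h
  · exact ⟨ε, hε, hαε, h⟩
  · refine ⟨ε + β, add_mem_of_inner_eq_neg_one hβ.1 hε hβ.2.1 h, ?_, ?_⟩
    · rw [inner_add_right, hαε, hαβ, add_zero]
    · rw [inner_add_right, h, hβ.2.1]; norm_num

theorem IsLong.add_sub_mem (hα : RS.IsLong α) (hβ : RS.IsLong β) (hγ : γ ∈ RS.R)
    (hαβ : ⟪α, β⟫ = 0) (hαγ : ⟪α, γ⟫ = 1) (hβγ : ⟪β, γ⟫ = 1) : α + β - γ ∈ RS.R := by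
  have hγα : γ - α ∈ RS.R := sub_mem_of_inner_eq_one hα.1 hγ hα.2.1 hαγ
  have hγαβ : γ - α - β ∈ RS.R := sub_mem_of_inner_eq_one hβ.1 hγα hβ.2.1 (by
    rw [inner_sub_right, hβγ, real_inner_comm, hαβ, sub_zero])
  simpa [sub_sub, add_comm] using RS.neg_mem _ hγαβ

section SpecialSubset

variable {S : Set (EuclideanSpace ℝ (Fin n))}

theorem inner_cases_of_mem (hS : ∀ α ∈ S, RS.IsLong α) (h1 : ∀ α ∈ S, ∀ β ∈ S, α + β ∉ RS.R)
    (hα : α ∈ S) (hβ : β ∈ S) : ⟪α, β⟫ = 0 ∨ ⟪α, β⟫ = 1 ∨ β = α ∨ β = -α := by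
  rcases (hS α hα).inner_cases (hS β hβ).1 with h | h | h | h | h
  · exact absurd (add_mem_of_inner_eq_neg_one (hS α hα).1 (hS β hβ).1 (hS α hα).2.1 h)
      (h1 β hβ α hα)
  exacts [.inl h, .inr (.inl h), .inr (.inr (.inl h)), .inr (.inr (.inr h))]

theorem mem_of_add_eq_add (h2 : ∀ γ ∈ RS.R \ S, ∀ δ ∈ RS.R, ∀ α ∈ S, ∀ β ∈ S, γ + δ ≠ α + β)
    (hγ : γ ∈ RS.R) (hv : v ∈ RS.R) (hα : α ∈ S) (hβ : β ∈ S) (h : γ + v = α + β) : γ ∈ S :=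
  by_contra fun hγS => h2 γ ⟨hγ, hγS⟩ v hv α hα β hβ h

theorem mapsTo_perp_of_inner_eq_one (hS : ∀ α ∈ S, RS.IsLong α)
    (h1 : ∀ α ∈ S, ∀ β ∈ S, α + β ∉ RS.R)
    (h2 : ∀ γ ∈ RS.R \ S, ∀ δ ∈ RS.R, ∀ α ∈ S, ∀ β ∈ S, γ + δ ≠ α + β)
    (hα : α ∈ S) (hβ : β ∈ S) (hαβ : ⟪α, β⟫ = 1) :
    Set.MapsTo (fun z => z - ⟪α - β, z⟫ • (α - β)) {γ ∈ S | ⟪α, γ⟫ = 0} {γ ∈ S | ⟪β, γ⟫ = 0} := by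
  rintro γ ⟨hγ, hαγ⟩
  obtain ⟨hαR, hαα, -⟩ := hS α hα
  obtain ⟨hβR, hββ, -⟩ := hS β hβ
  have hβα : ⟪β, α⟫ = 1 := real_inner_comm α β ▸ hαβ
  rcases inner_cases_of_mem hS h1 hβ hγ with hβγ | hβγ | rfl | rfl
  · have hfix : ⟪α - β, γ⟫ = 0 := by rw [inner_sub_left, hαγ, hβγ, sub_zero]
    simpa [hfix] using ⟨hγ, hβγ⟩
  · have hmove : ⟪α - β, γ⟫ = -1 := by rw [inner_sub_left, hαγ, hβγ]; norm_num
    have hroot : α - β ∈ RS.R := sub_mem_of_inner_eq_one hβR hαR hββ hβα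
    have hnorm : ⟪α - β, α - β⟫ = 2 := by
      simp only [inner_sub_left, inner_sub_right, hαα, hββ, hαβ, hβα]; norm_num
    have hγ' : γ + (α - β) ∈ RS.R :=
      add_mem_of_inner_eq_neg_one hroot (hS γ hγ).1 hnorm hmove
    simp only [Set.mem_ofPred_eq, hmove, neg_one_smul, sub_neg_eq_add]
    refine ⟨mem_of_add_eq_add h2 hγ' hβR hγ hα (by abel), ?_⟩
    rw [inner_add_right, inner_sub_right, hβγ, hβα, hββ]; norm_num
  · simp [hαβ] at hαγ
  · simp [hαβ] at hαγ

theorem ncard_perp_eq_of_inner_eq_one (hS : ∀ α ∈ S, RS.IsLong α)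
    (h1 : ∀ α ∈ S, ∀ β ∈ S, α + β ∉ RS.R)
    (h2 : ∀ γ ∈ RS.R \ S, ∀ δ ∈ RS.R, ∀ α ∈ S, ∀ β ∈ S, γ + δ ≠ α + β)
    (hα : α ∈ S) (hβ : β ∈ S) (hαβ : ⟪α, β⟫ = 1) :
    {γ ∈ S | ⟪α, γ⟫ = 0}.ncard = {γ ∈ S | ⟪β, γ⟫ = 0}.ncard := by
  set s := fun z => z - ⟪α - β, z⟫ • (α - β)
  have hnorm : ⟪α - β, α - β⟫ = 2 := by
    simp only [inner_sub_left, inner_sub_right, (hS α hα).2.1, (hS β hβ).2.1, hαβ,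
      real_inner_comm α β]
    norm_num
  have hinv : ∀ z, s (s z) = z := fun z => by
    simp only [s, inner_sub_right, real_inner_smul_right, hnorm]
    module
  have hsymm : (fun z => z - ⟪β - α, z⟫ • (β - α)) = s := by
    funext z; rw [← neg_sub α β, inner_neg_left, neg_smul_neg]
  refine Set.BijOn.ncard_eq (Set.InvOn.bijOn ⟨fun z _ => hinv z, fun z _ => hinv z⟩
    (mapsTo_perp_of_inner_eq_one hS h1 h2 hα hβ hαβ) ?_)
  exact hsymm ▸ mapsTo_perp_of_inner_eq_one hS h1 h2 hβ hα (real_inner_comm α β ▸ hαβ)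

end SpecialSubset

end RootSys

open RootSys

/-- If `S` is a set of long roots with `α + β ∉ R` for all `α, β ∈ S` and
`(γ + R) ∩ (S + S) = ∅` for `γ ∈ R \ S`, then all the sets
`α^⊥ = {γ ∈ S : (α, γ) = 0}` for `α ∈ S` have the same cardinality. -/
theorem stmt_14 {n : ℕ} (RS : RootSys n) (S : Set (EuclideanSpace ℝ (Fin n)))
    (hSR : S ⊆ RS.R)
    (hnorm : ∀ δ ∈ RS.R, (∀ ε ∈ RS.R, ‖ε‖ ≤ ‖δ‖) → ⟪δ, δ⟫ = 2)
    (hlong : ∀ α ∈ S, ∀ ε ∈ RS.R, ‖ε‖ ≤ ‖α‖)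
    (h1 : ∀ α ∈ S, ∀ β ∈ S, α + β ∉ RS.R)
    (h2 : ∀ γ ∈ RS.R \ S, ∀ δ ∈ RS.R, ∀ α ∈ S, ∀ β ∈ S, γ + δ ≠ α + β) :
    ∀ α ∈ S, ∀ β ∈ S,
      {γ ∈ S | ⟪α, γ⟫ = 0}.ncard = {γ ∈ S | ⟪β, γ⟫ = 0}.ncard := by
  have hS : ∀ α ∈ S, RS.IsLong α := fun α hα =>
    ⟨hSR hα, hnorm α (hSR hα) (hlong α hα), hlong α hα⟩
  intro α hα β hβ
  rcases inner_cases_of_mem hS h1 hα hβ with hαβ | hαβ | rfl | rfl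
  · obtain ⟨γ, hγ, hαγ, hβγ⟩ := (hS α hα).exists_inner_eq_one_inner_eq_one (hS β hβ) hαβ
    have hγS : γ ∈ S := mem_of_add_eq_add h2 hγ
      ((hS α hα).add_sub_mem (hS β hβ) hγ hαβ hαγ hβγ) hα hβ (by abel)
    rw [ncard_perp_eq_of_inner_eq_one hS h1 h2 hα hγS hαγ,
      ncard_perp_eq_of_inner_eq_one hS h1 h2 hβ hγS hβγ]
  · exact ncard_perp_eq_of_inner_eq_one hS h1 h2 hα hβ hαβ
  · rfl
  · simp only [inner_neg_left, neg_eq_zero]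
end

section
/- Let R be an irreducible root system and S ⊆ R. Suppose S = S(λ) for some weight λ with max λ > 0, where max λ = max{(λ, α) : α ∈ R} and S(λ) = {α ∈ R : (λ, α) = max λ}. Then for η in the ℤ₊-span of S, if η = Σ m_α α over α ∈ R with m_α ∈ ℤ₊ and Σ m_α equals the minimal number of roots (with multiplicity) summing to η, then m_α = 0 for all α ∉ S; conversely any expression of η as a sum of elements of S uses the minimal number of roots. -/
/-!
Pairing with `λ` turns a decomposition `η = ∑ m_α α` into `⟪λ, η⟫ = ∑ m_α ⟪λ, α⟫ ≤ (∑ m_α) · max λ`,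
with equality exactly when the decomposition is supported on `S(λ)`. A decomposition supported on
`S(λ)` therefore has length `⟪λ, η⟫ / max λ`, which bounds the length of every decomposition from
below; so it is `𝐝(η)`, and a decomposition attains it iff it attains the equality case.
-/

open RealInnerProductSpace

namespace RootSys

variable {n : ℕ} (RS : RootSys n)

/-- `m` encodes a decomposition of `η` as a `ℤ₊`-combination of roots. -/
noncomputable def IsDecomp (η : EuclideanSpace ℝ (Fin n))
    (m : EuclideanSpace ℝ (Fin n) → ℕ) : Prop :=
  (∀ α, m α ≠ 0 → α ∈ RS.R) ∧ η = ∑ α ∈ RS.finite.toFinset, (m α : ℝ) • α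

/-- `𝐝(η)`: the minimal number of roots (with multiplicity) summing to `η`. -/
noncomputable def dd (η : EuclideanSpace ℝ (Fin n)) : ℕ :=
  sInf {k | ∃ m, RS.IsDecomp η m ∧ ∑ α ∈ RS.finite.toFinset, m α = k}

end RootSys

namespace RootSys

variable {n : ℕ}

theorem IsDecomp.inner_eq_sum {RS : RootSys n} {η : EuclideanSpace ℝ (Fin n)}
    {m : EuclideanSpace ℝ (Fin n) → ℕ} (h : RS.IsDecomp η m) (v : EuclideanSpace ℝ (Fin n)) :
    ⟪v, η⟫ = ∑ α ∈ RS.finite.toFinset, (m α : ℝ) * ⟪v, α⟫ := by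
  simp only [h.2, inner_sum, real_inner_smul_right]

theorem dd_eq_of_isDecomp_of_forall_le (RS : RootSys n) {η : EuclideanSpace ℝ (Fin n)}
    {m₀ : EuclideanSpace ℝ (Fin n) → ℕ} (hm₀ : RS.IsDecomp η m₀)
    (hmin : ∀ m, RS.IsDecomp η m →
      ∑ α ∈ RS.finite.toFinset, m₀ α ≤ ∑ α ∈ RS.finite.toFinset, m α) :
    RS.dd η = ∑ α ∈ RS.finite.toFinset, m₀ α :=
  le_antisymm (Nat.sInf_le ⟨m₀, hm₀, rfl⟩) <|
    le_csInf ⟨_, m₀, hm₀, rfl⟩ fun _ ⟨m, hm, hk⟩ => hk ▸ hmin m hm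

section Height

variable {RS : RootSys n} {lam : EuclideanSpace ℝ (Fin n)} {M : ℝ}
  {η : EuclideanSpace ℝ (Fin n)} {m : EuclideanSpace ℝ (Fin n) → ℕ}

theorem IsDecomp.inner_le (hM : ∀ α ∈ RS.R, ⟪lam, α⟫ ≤ M) (h : RS.IsDecomp η m) :
    ⟪lam, η⟫ ≤ (∑ α ∈ RS.finite.toFinset, m α : ℕ) * M := by
  rw [h.inner_eq_sum, Nat.cast_sum, Finset.sum_mul]
  exact Finset.sum_le_sum fun α hα =>
    mul_le_mul_of_nonneg_left (hM α (RS.finite.mem_toFinset.1 hα)) (Nat.cast_nonneg _)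

theorem IsDecomp.inner_eq_iff (hM : ∀ α ∈ RS.R, ⟪lam, α⟫ ≤ M) (h : RS.IsDecomp η m) :
    ⟪lam, η⟫ = (∑ α ∈ RS.finite.toFinset, m α : ℕ) * M ↔
      ∀ α ∉ {α ∈ RS.R | ⟪lam, α⟫ = M}, m α = 0 := by
  rw [h.inner_eq_sum, Nat.cast_sum, Finset.sum_mul, Finset.sum_eq_sum_iff_of_le fun α hα =>
    mul_le_mul_of_nonneg_left (hM α (RS.finite.mem_toFinset.1 hα)) (Nat.cast_nonneg _)]
  simp only [mul_eq_mul_left_iff, Nat.cast_eq_zero, Set.Finite.mem_toFinset, Set.mem_ofPred_eq]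
  constructor
  · intro hsupp α hα
    by_contra h0
    have hαR := h.1 α h0
    exact hα ⟨hαR, (hsupp α hαR).resolve_right h0⟩
  · intro hsupp α hαR
    by_cases hα : ⟪lam, α⟫ = M
    · exact Or.inl hα
    · exact Or.inr (hsupp α fun hS => hα hS.2)

end Height

end RootSys

/-- If `S = S(λ)` with `max λ > 0`, then for `η` in the `ℤ₊`-span of `S`, a
`ℤ₊`-root-decomposition of `η` has minimal length `𝐝(η)` iff it is supported
on `S`. -/
theorem stmt_15 {n : ℕ} (RS : RootSys n) (S : Set (EuclideanSpace ℝ (Fin n)))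
    (lam : EuclideanSpace ℝ (Fin n)) (M : ℝ)
    (hM : IsGreatest ((fun α => ⟪lam, α⟫) '' RS.R) M) (hMpos : 0 < M)
    (hS : S = {α ∈ RS.R | ⟪lam, α⟫ = M})
    (η : EuclideanSpace ℝ (Fin n))
    (hη : ∃ m, RS.IsDecomp η m ∧ ∀ α ∉ S, m α = 0) :
    ∀ m, RS.IsDecomp η m →
      ((∑ α ∈ RS.finite.toFinset, m α = RS.dd η) ↔ ∀ α ∉ S, m α = 0) := by
  subst hS
  have hle : ∀ α ∈ RS.R, ⟪lam, α⟫ ≤ M := fun α hα => hM.2 ⟨α, hα, rfl⟩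
  obtain ⟨m₀, hm₀, hm₀S⟩ := hη
  have hη_eq := (hm₀.inner_eq_iff hle).2 hm₀S
  have hdd := RS.dd_eq_of_isDecomp_of_forall_le hm₀ fun m hm => by
    exact_mod_cast le_of_mul_le_mul_right (hη_eq ▸ hm.inner_le hle) hMpos
  intro m hm
  rw [hdd, ← hm.inner_eq_iff hle, hη_eq, mul_left_inj' hMpos.ne', Nat.cast_inj, eq_comm]
end

section
/- Let R be an irreducible root system and S ⊆ R. If the condition holds that every η in the ℤ₊-span of S achieves its minimal-length root decomposition exactly by expressions supported on S (i.e., for η ∈ ℤ₊S written as η = Σ_{α∈R} m_α α with m_α ∈ ℤ₊, one has Σ m_α = 𝐝(η) iff m_α = 0 for all α ∉ S), then: α + β ∉ R for all α, β ∈ S, and for γ ∈ R \ S, (γ + R) ∩ (S + S) = ∅. -/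
/-!
If `α, β ∈ S`, then `α + β` has a decomposition of length two supported on `S`, so the hypothesis
forces `𝐝(α + β) = 2`. This excludes `α + β ∈ R` (which would give `𝐝(α + β) ≤ 1`), and it makes
`γ + δ`, read as a decomposition of `α + β = γ + δ` of length two, a minimal one, hence supported
on `S`, which fails when `γ ∉ S`.
-/

open RealInnerProductSpace

namespace RootSys

variable {n : ℕ} (RS : RootSys n)

theorem dd_le {η : EuclideanSpace ℝ (Fin n)} {m : EuclideanSpace ℝ (Fin n) → ℕ}
    (h : RS.IsDecomp η m) : RS.dd η ≤ ∑ α ∈ RS.finite.toFinset, m α :=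
  Nat.sInf_le ⟨m, h, rfl⟩

variable {RS} in
theorem IsDecomp.add {η η' : EuclideanSpace ℝ (Fin n)} {m m' : EuclideanSpace ℝ (Fin n) → ℕ}
    (h : RS.IsDecomp η m) (h' : RS.IsDecomp η' m') : RS.IsDecomp (η + η') (m + m') := by
  refine ⟨fun α hα => ?_, ?_⟩
  · by_cases hm : m α = 0
    · exact h'.1 α (by simpa [hm] using hα)
    · exact h.1 α hm
  · simp only [Pi.add_apply, Nat.cast_add, add_smul, Finset.sum_add_distrib, ← h.2, ← h'.2]

theorem isDecomp_single {α : EuclideanSpace ℝ (Fin n)} (hα : α ∈ RS.R) :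
    RS.IsDecomp α (Pi.single α 1) := by
  refine ⟨fun x hx => ?_, ?_⟩
  · by_cases hxα : x = α
    · exact hxα ▸ hα
    · simp [Pi.single_eq_of_ne hxα] at hx
  · rw [Finset.sum_eq_single_of_mem α (RS.finite.mem_toFinset.2 hα)
      (fun x _ hxα => by simp [Pi.single_eq_of_ne hxα])]
    simp

theorem sum_single {α : EuclideanSpace ℝ (Fin n)} (hα : α ∈ RS.R) :
    ∑ x ∈ RS.finite.toFinset, (Pi.single α 1 : EuclideanSpace ℝ (Fin n) → ℕ) x = 1 := by
  simp [Finset.sum_pi_single', RS.finite.mem_toFinset.2 hα]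

theorem dd_le_one {α : EuclideanSpace ℝ (Fin n)} (hα : α ∈ RS.R) : RS.dd α ≤ 1 :=
  (RS.dd_le (RS.isDecomp_single hα)).trans_eq (RS.sum_single hα)

theorem isDecomp_pair {α β : EuclideanSpace ℝ (Fin n)} (hα : α ∈ RS.R) (hβ : β ∈ RS.R) :
    RS.IsDecomp (α + β) (Pi.single α 1 + Pi.single β 1) :=
  (RS.isDecomp_single hα).add (RS.isDecomp_single hβ)

theorem sum_pair {α β : EuclideanSpace ℝ (Fin n)} (hα : α ∈ RS.R) (hβ : β ∈ RS.R) :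
    ∑ x ∈ RS.finite.toFinset, (Pi.single α 1 + Pi.single β 1 : EuclideanSpace ℝ (Fin n) → ℕ) x
      = 2 := by
  simp only [Pi.add_apply, Finset.sum_add_distrib, RS.sum_single hα, RS.sum_single hβ]

end RootSys

theorem pair_apply_eq_zero_of_notMem {E : Type*} [DecidableEq E] {s : Set E} {α β x : E}
    (hα : α ∈ s) (hβ : β ∈ s) (hx : x ∉ s) : (Pi.single α 1 + Pi.single β 1 : E → ℕ) x = 0 := by
  have hxα : x ≠ α := by rintro rfl; exact hx hα
  have hxβ : x ≠ β := by rintro rfl; exact hx hβ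
  simp [Pi.single_eq_of_ne hxα, Pi.single_eq_of_ne hxβ]

/-- If every `η` in the `ℤ₊`-span of `S` achieves its minimal-length root
decomposition exactly by expressions supported on `S`, then `α + β ∉ R` for all
`α, β ∈ S`, and `(γ + R) ∩ (S + S) = ∅` for `γ ∈ R \ S`. -/
theorem stmt_16 {n : ℕ} (RS : RootSys n) (S : Set (EuclideanSpace ℝ (Fin n)))
    (hSR : S ⊆ RS.R)
    (hmin : ∀ η : EuclideanSpace ℝ (Fin n),
      (∃ m, RS.IsDecomp η m ∧ ∀ α ∉ S, m α = 0) →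
      ∀ m, RS.IsDecomp η m →
        ((∑ α ∈ RS.finite.toFinset, m α = RS.dd η) ↔ ∀ α ∉ S, m α = 0)) :
    (∀ α ∈ S, ∀ β ∈ S, α + β ∉ RS.R) ∧
    (∀ γ ∈ RS.R \ S, ∀ δ ∈ RS.R, ∀ α ∈ S, ∀ β ∈ S, γ + δ ≠ α + β) := by
  have hdd_two : ∀ α ∈ S, ∀ β ∈ S, RS.dd (α + β) = 2 ∧
      ∀ m, RS.IsDecomp (α + β) m → (∑ x ∈ RS.finite.toFinset, m x = 2 ↔ ∀ x ∉ S, m x = 0) := by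
    intro α hα β hβ
    have hpair := RS.isDecomp_pair (hSR hα) (hSR hβ)
    have hsupp : ∀ x ∉ S, (Pi.single α 1 + Pi.single β 1 : _ → ℕ) x = 0 := fun _ =>
      pair_apply_eq_zero_of_notMem hα hβ
    have hdd := (hmin _ ⟨_, hpair, hsupp⟩ _ hpair).2 hsupp
    rw [RS.sum_pair (hSR hα) (hSR hβ)] at hdd
    exact ⟨hdd.symm, fun m hm => hdd ▸ hmin _ ⟨_, hpair, hsupp⟩ m hm⟩
  refine ⟨fun α hα β hβ hαβ => ?_, fun γ hγ δ hδ α hα β hβ heq => ?_⟩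
  · have hle := RS.dd_le_one hαβ
    rw [(hdd_two α hα β hβ).1] at hle
    omega
  · have hγδ := RS.isDecomp_pair hγ.1 hδ
    rw [heq] at hγδ
    have hsupp := ((hdd_two α hα β hβ).2 _ hγδ).1 (RS.sum_pair hγ.1 hδ)
    simpa using hsupp γ hγ.2
end
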